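/- Bound on the solution: There exists a constant C, independent of ε₁,…,εₙ (depending only on n, α and T), such that for every choice of parameters 0 < ε₁ < … < εₙ < 1, every continuous data f, φ_L, φ_R, φ_B, and every solution u of the problem Lu = f on Ω with β₀u(0,t) = φ_L(t), β₁u(1,t) = φ_R(t) for t ∈ [0,T] and u(x,0) = φ_B(x) for x ∈ [0,1], with u in the domain of L, one has for all (x,t) ∈ Ω̄ and each i = 1,…,n: |u_i(x,t)| ≤ C( ‖φ_L‖ + ‖φ_R‖ + ‖φ_B‖ + ‖f‖ ), where ‖·‖ denotes the supremum over the relevant domain of the maximum of the absolute values of all components. -/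

import Mathlib

/-!
Maximum principle. Let `w` be a supersolution: `L w ≥ 0`, `β₀ w ≥ 0`, `β₁ w ≥ 0`, `w(·,0) ≥ 0`.
Take a minimum of all components of `w` jointly over `Ω̄`; if it were negative, it could not lie
at `t = 0`, nor at `x = 0` or `x = 1` (there `∂ₓwᵢ` has the sign that makes `β₀w` resp. `β₁w`
negative), nor inside (there `∂ₜwᵢ ≤ 0`, `∂ₓ²wᵢ ≥ 0`, and since the off-diagonal `aᵢⱼ` are
nonpositive the reaction term is at most `(∑ⱼ aᵢⱼ) wᵢ < 0`). Applying this to `M ± u` with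
`M = (1 + 1/α)(‖φ_L‖ + ‖φ_R‖ + ‖φ_B‖ + ‖f‖)`, for which `α M ≥ ‖f‖`, bounds `|u|` by `M`.
-/

open Set Filter Topology

theorem IsLocalMinOn.hasDerivWithinAt_nonneg_of_segment_subset {f : ℝ → ℝ} {s : Set ℝ}
    {a b f' : ℝ} (h : IsLocalMinOn f s a) (hf : HasDerivWithinAt f f' s a)
    (hs : segment ℝ a b ⊆ s) : 0 ≤ (b - a) * f' := by
  simpa only [ContinuousLinearMap.toSpanSingleton_apply, smul_eq_mul]
    using h.hasFDerivWithinAt_nonneg hf (sub_mem_posTangentConeAt_of_segment_subset hs)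

theorem IsLocalMin.nonneg_of_hasDerivAt_of_hasDerivAt {f f' : ℝ → ℝ} {a f'' : ℝ}
    (h : IsLocalMin f a) (hf : ∀ᶠ x in 𝓝 a, HasDerivAt f (f' x) x)
    (hf' : HasDerivAt f' f'' a) : 0 ≤ f'' := by
  -- If `f'' < 0`, then `f' < 0` just right of `a`, and the mean value theorem makes `f` drop there.
  by_contra! hneg
  have hf'a : f' a = 0 := h.hasDerivAt_eq_zero hf.self_of_nhds
  have hf'_neg : ∀ᶠ x in 𝓝[>] a, f' x < 0 := by
    filter_upwards [((hasDerivAt_iff_tendsto_slope.mp hf').mono_left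
      (nhdsWithin_mono a fun x hx => ne_of_gt hx)).eventually (gt_mem_nhds hneg),
      self_mem_nhdsWithin] with x hx hxa
    rw [slope_def_field, hf'a, sub_zero] at hx
    exact neg_of_div_neg_left hx (sub_pos.mpr hxa).le
  obtain ⟨b, hab, hb⟩ := mem_nhdsGT_iff_exists_Ioo_subset.mp
    (hf'_neg.and (nhdsWithin_le_nhds (hf.and h)))
  set c := (a + b) / 2
  have hac : a < c := left_lt_add_div_two.mpr hab
  have hc : c ∈ Ioo a b := ⟨hac, add_div_two_lt_right.mpr hab⟩
  have hderiv : ∀ x ∈ Ioo a c, HasDerivAt f (f' x) x := fun x hx =>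
    (hb ⟨hx.1, hx.2.trans hc.2⟩).2.1
  have hcont : ContinuousOn f (Icc a c) := by
    intro x hx
    rcases hx.1.eq_or_lt with rfl | hax
    · exact hf.self_of_nhds.continuousAt.continuousWithinAt
    · exact (hb ⟨hax, hx.2.trans_lt hc.2⟩).2.1.continuousAt.continuousWithinAt
  obtain ⟨ξ, hξ, hslope⟩ := exists_hasDerivAt_eq_slope f f' hac hcont hderiv
  have : 0 ≤ (f c - f a) / (c - a) := div_nonneg (sub_nonneg.mpr (hb hc).2.2) (sub_pos.mpr hac).le
  exact (hb ⟨hξ.1, hξ.2.trans hc.2⟩).1.not_ge (hslope ▸ this)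

theorem IsCompact.exists_forall_le_of_finite {ι X α : Type*} [Finite ι] [Nonempty ι]
    [TopologicalSpace X] [LinearOrder α] [TopologicalSpace α] [ClosedIicTopology α]
    {K : Set X} (hK : IsCompact K) (hne : K.Nonempty) {f : ι → X → α}
    (hf : ∀ i, ContinuousOn (f i) K) :
    ∃ i₀, ∃ p₀ ∈ K, ∀ i, ∀ p ∈ K, f i₀ p₀ ≤ f i p := by
  choose p hp hmin using fun i => hK.exists_isMinOn hne (hf i)
  obtain ⟨i₀, hi₀⟩ := Finite.exists_min fun i => f i (p i)
  exact ⟨i₀, p i₀, hp i₀, fun i q hq => (hi₀ i).trans (hmin i hq)⟩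

theorem Finset.sum_mul_le_sum_mul_of_offDiag_nonpos {ι : Type*} [Fintype ι] {a w : ι → ℝ}
    {i : ι} (ha : ∀ j, j ≠ i → a j ≤ 0) (hw : ∀ j, w i ≤ w j) :
    ∑ j, a j * w j ≤ (∑ j, a j) * w i := by
  rw [Finset.sum_mul]
  refine Finset.sum_le_sum fun j _ => ?_
  by_cases hj : j = i
  · rw [hj]
  · exact mul_le_mul_of_nonpos_left (hw j) (ha j hj)

variable {ι : Type*}

/-- The operator `L`, with `wt` and `wxx` standing for `∂w/∂t` and `∂²w/∂x²`. -/
def parabolicOp [Fintype ι] (ε : ι → ℝ) (a : ι → ι → ℝ → ℝ → ℝ) (w wt wxx : ι → ℝ → ℝ → ℝ)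
    (i : ι) (x t : ℝ) : ℝ :=
  wt i x t - ε i * wxx i x t + ∑ j, a i j x t * w j x t

theorem parabolicOp_const_add_mul [Fintype ι] (ε : ι → ℝ) (a : ι → ι → ℝ → ℝ → ℝ)
    (w wt wxx : ι → ℝ → ℝ → ℝ) (M σ : ℝ) (i : ι) (x t : ℝ) :
    parabolicOp ε a (fun j y s => M + σ * w j y s) (fun j y s => σ * wt j y s)
        (fun j y s => σ * wxx j y s) i x t =
      σ * parabolicOp ε a w wt wxx i x t + (∑ j, a i j x t) * M := by
  simp only [parabolicOp, mul_add, Finset.sum_add_distrib, ← Finset.sum_mul, mul_left_comm _ σ,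
    ← Finset.mul_sum]
  ring

structure HasParabolicDerivs (T : ℝ) (w wx wt wxx : ι → ℝ → ℝ → ℝ) : Prop where
  continuousOn : ∀ i, ContinuousOn (fun p : ℝ × ℝ => w i p.1 p.2) (Icc 0 1 ×ˢ Icc 0 T)
  hasDerivWithinAt_x : ∀ i, ∀ t ∈ Icc (0:ℝ) T, ∀ x ∈ Icc (0:ℝ) 1,
    HasDerivWithinAt (fun y => w i y t) (wx i x t) (Icc 0 1) x
  hasDerivWithinAt_t : ∀ i, ∀ x ∈ Ioo (0:ℝ) 1, ∀ t ∈ Ioc (0:ℝ) T,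
    HasDerivWithinAt (fun s => w i x s) (wt i x t) (Icc 0 T) t
  hasDerivWithinAt_xx : ∀ i, ∀ t ∈ Ioc (0:ℝ) T, ∀ x ∈ Ioo (0:ℝ) 1,
    HasDerivWithinAt (fun y => wx i y t) (wxx i x t) (Ioo 0 1) x

theorem HasParabolicDerivs.const_add_mul {T : ℝ} {w wx wt wxx : ι → ℝ → ℝ → ℝ}
    (hw : HasParabolicDerivs T w wx wt wxx) (M σ : ℝ) :
    HasParabolicDerivs T (fun i x t => M + σ * w i x t) (fun i x t => σ * wx i x t)
      (fun i x t => σ * wt i x t) (fun i x t => σ * wxx i x t) where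
  continuousOn i := continuousOn_const.add (continuousOn_const.mul (hw.continuousOn i))
  hasDerivWithinAt_x i t ht x hx := ((hw.hasDerivWithinAt_x i t ht x hx).const_mul σ).const_add M
  hasDerivWithinAt_t i x hx t ht := ((hw.hasDerivWithinAt_t i x hx t ht).const_mul σ).const_add M
  hasDerivWithinAt_xx i t ht x hx := (hw.hasDerivWithinAt_xx i t ht x hx).const_mul σ

section

variable [Fintype ι] {T : ℝ} {ε : ι → ℝ} {a : ι → ι → ℝ → ℝ → ℝ} {w wx wt wxx : ι → ℝ → ℝ → ℝ}

theorem HasParabolicDerivs.parabolicOp_le_of_forall_le (hw : HasParabolicDerivs T w wx wt wxx)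
    {i₀ : ι} {x₀ t₀ : ℝ} (hε : 0 ≤ ε i₀) (ha : ∀ j, j ≠ i₀ → a i₀ j x₀ t₀ ≤ 0)
    (hx₀ : x₀ ∈ Ioo 0 1) (ht₀ : t₀ ∈ Ioc 0 T)
    (hmin : ∀ j, ∀ x ∈ Icc (0:ℝ) 1, ∀ t ∈ Icc (0:ℝ) T, w i₀ x₀ t₀ ≤ w j x t) :
    parabolicOp ε a w wt wxx i₀ x₀ t₀ ≤ (∑ j, a i₀ j x₀ t₀) * w i₀ x₀ t₀ := by
  have hx₀' : x₀ ∈ Icc 0 1 := Ioo_subset_Icc_self hx₀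
  have ht₀' : t₀ ∈ Icc 0 T := Ioc_subset_Icc_self ht₀
  have hwt : wt i₀ x₀ t₀ ≤ 0 := by
    have hmin_t : IsMinOn (fun s => w i₀ x₀ s) (Icc 0 T) t₀ := fun s hs => hmin i₀ x₀ hx₀' s hs
    have := hmin_t.localize.hasDerivWithinAt_nonneg_of_segment_subset (b := 0)
      (hw.hasDerivWithinAt_t i₀ x₀ hx₀ t₀ ht₀)
      (by rw [segment_symm, segment_eq_Icc ht₀.1.le]; exact Icc_subset_Icc_right ht₀.2)
    nlinarith [ht₀.1]
  have hwxx : 0 ≤ wxx i₀ x₀ t₀ := by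
    have hmin_x : IsLocalMin (fun y => w i₀ y t₀) x₀ :=
      mem_of_superset (Icc_mem_nhds hx₀.1 hx₀.2) fun y hy => hmin i₀ y hy t₀ ht₀'
    refine hmin_x.nonneg_of_hasDerivAt_of_hasDerivAt (f' := fun y => wx i₀ y t₀) ?_
      ((hw.hasDerivWithinAt_xx i₀ t₀ ht₀ x₀ hx₀).hasDerivAt (Ioo_mem_nhds hx₀.1 hx₀.2))
    filter_upwards [Ioo_mem_nhds hx₀.1 hx₀.2] with y hy
    exact (hw.hasDerivWithinAt_x i₀ t₀ ht₀' y (Ioo_subset_Icc_self hy)).hasDerivAt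
      (Icc_mem_nhds hy.1 hy.2)
  have hreact := Finset.sum_mul_le_sum_mul_of_offDiag_nonpos (w := fun j => w j x₀ t₀) ha fun j => hmin j x₀ hx₀' t₀ ht₀'
  rw [parabolicOp]
  nlinarith [mul_nonneg hε hwxx]

theorem HasParabolicDerivs.nonneg_of_parabolicOp_nonneg (hw : HasParabolicDerivs T w wx wt wxx)
    (hε : ∀ i, 0 ≤ ε i)
    (ha : ∀ i j, i ≠ j → ∀ x ∈ Icc (0:ℝ) 1, ∀ t ∈ Icc (0:ℝ) T, a i j x t ≤ 0)
    (hasum : ∀ i, ∀ x ∈ Icc (0:ℝ) 1, ∀ t ∈ Icc (0:ℝ) T, 0 < ∑ j, a i j x t)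
    (hL : ∀ i, ∀ x ∈ Ioo (0:ℝ) 1, ∀ t ∈ Ioc (0:ℝ) T, 0 ≤ parabolicOp ε a w wt wxx i x t)
    (hB0 : ∀ i, ∀ t ∈ Icc (0:ℝ) T, 0 ≤ w i 0 t - √(ε i) * wx i 0 t)
    (hB1 : ∀ i, ∀ t ∈ Icc (0:ℝ) T, 0 ≤ w i 1 t + √(ε i) * wx i 1 t)
    (hInit : ∀ i, ∀ x ∈ Icc (0:ℝ) 1, 0 ≤ w i x 0) :
    ∀ i, ∀ x ∈ Icc (0:ℝ) 1, ∀ t ∈ Icc (0:ℝ) T, 0 ≤ w i x t := by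
  intro i x hx t ht
  have : Nonempty ι := ⟨i⟩
  obtain ⟨i₀, ⟨x₀, t₀⟩, ⟨hx₀, ht₀⟩, hmin⟩ := (isCompact_Icc.prod isCompact_Icc).exists_forall_le_of_finite
    ⟨(x, t), hx, ht⟩ hw.continuousOn
  replace hmin : ∀ j, ∀ y ∈ Icc (0:ℝ) 1, ∀ s ∈ Icc (0:ℝ) T, w i₀ x₀ t₀ ≤ w j y s :=
    fun j y hy s hs => hmin j (y, s) ⟨hy, hs⟩
  refine le_trans ?_ (hmin i x hx t ht)
  by_contra! hneg
  have hmin_x : IsMinOn (fun y => w i₀ y t₀) (Icc 0 1) x₀ := fun y hy => hmin i₀ y hy t₀ ht₀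
  have hwx := hw.hasDerivWithinAt_x i₀ t₀ ht₀ x₀ hx₀
  have hsqrt := Real.sqrt_nonneg (ε i₀)
  rcases ht₀.1.eq_or_lt with rfl | ht₀pos
  · exact hneg.not_ge (hInit i₀ x₀ hx₀)
  rcases hx₀.1.eq_or_lt with rfl | hx₀pos
  · have := hmin_x.localize.hasDerivWithinAt_nonneg_of_segment_subset (b := 1) hwx
      (segment_eq_Icc zero_le_one).subset
    nlinarith [hB0 i₀ t₀ ht₀]
  rcases hx₀.2.eq_or_lt with rfl | hx₀lt
  · have := hmin_x.localize.hasDerivWithinAt_nonneg_of_segment_subset (b := 0) hwx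
      (by rw [segment_symm, segment_eq_Icc zero_le_one])
    nlinarith [hB1 i₀ t₀ ht₀]
  · have hlt := (hw.parabolicOp_le_of_forall_le (hε i₀) (fun j hj => ha i₀ j hj.symm x₀ hx₀ t₀ ht₀)
      ⟨hx₀pos, hx₀lt⟩ ⟨ht₀pos, ht₀.2⟩ hmin).trans_lt (mul_neg_of_pos_of_neg (hasum i₀ x₀ hx₀ t₀ ht₀) hneg)
    exact hlt.not_ge (hL i₀ x₀ ⟨hx₀pos, hx₀lt⟩ t₀ ⟨ht₀pos, ht₀.2⟩)

theorem HasParabolicDerivs.abs_le_of_abs_le (hw : HasParabolicDerivs T w wx wt wxx)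
    (hε : ∀ i, 0 ≤ ε i)
    (ha : ∀ i j, i ≠ j → ∀ x ∈ Icc (0:ℝ) 1, ∀ t ∈ Icc (0:ℝ) T, a i j x t ≤ 0)
    {α M : ℝ} (hα : 0 ≤ α) (hasum : ∀ i, ∀ x ∈ Icc (0:ℝ) 1, ∀ t ∈ Icc (0:ℝ) T, α < ∑ j, a i j x t)
    (hM : 0 ≤ M)
    (hL : ∀ i, ∀ x ∈ Ioo (0:ℝ) 1, ∀ t ∈ Ioc (0:ℝ) T, |parabolicOp ε a w wt wxx i x t| ≤ α * M)
    (hB0 : ∀ i, ∀ t ∈ Icc (0:ℝ) T, |w i 0 t - √(ε i) * wx i 0 t| ≤ M)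
    (hB1 : ∀ i, ∀ t ∈ Icc (0:ℝ) T, |w i 1 t + √(ε i) * wx i 1 t| ≤ M)
    (hInit : ∀ i, ∀ x ∈ Icc (0:ℝ) 1, |w i x 0| ≤ M) :
    ∀ i, ∀ x ∈ Icc (0:ℝ) 1, ∀ t ∈ Icc (0:ℝ) T, |w i x t| ≤ M := by
  intro i x hx t ht
  have key : ∀ σ : ℝ, |σ| = 1 → 0 ≤ M + σ * w i x t := by
    intro σ hσ
    have hσM : ∀ {y c : ℝ}, |y| ≤ c → -c ≤ σ * y := by
      intro y c hy
      have := neg_abs_le (σ * y)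
      rw [abs_mul, hσ, one_mul] at this
      linarith
    refine (hw.const_add_mul M σ).nonneg_of_parabolicOp_nonneg hε ha
      (fun i x hx t ht => hα.trans_lt (hasum i x hx t ht)) (fun i x hx t ht => ?_)
      (fun i t ht => ?_) (fun i t ht => ?_) (fun i x hx => ?_) i x hx t ht
    · have hx' := Ioo_subset_Icc_self hx
      have ht' := Ioc_subset_Icc_self ht
      rw [parabolicOp_const_add_mul]
      nlinarith [hσM (hL i x hx t ht), hasum i x hx' t ht']
    · linarith [hσM (hB0 i t ht)]
    · linarith [hσM (hB1 i t ht)]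
    · linarith [hσM (hInit i x hx)]
  exact abs_le.mpr ⟨by linarith [key 1 (by simp)], by linarith [key (-1) (by simp)]⟩

end

theorem stmt_2_general
    (n : ℕ) (T : ℝ) (α : ℝ) (hα0 : 0 < α) :
    ∃ C : ℝ, 0 < C ∧
      ∀ (ε : Fin (n + 1) → ℝ), (∀ i, 0 < ε i) → (∀ i, ε i < 1) → StrictMono ε →
      ∀ (a : Fin (n + 1) → Fin (n + 1) → ℝ → ℝ → ℝ),
      (∀ i j, ContinuousOn (fun p : ℝ × ℝ => a i j p.1 p.2)
        (Set.Icc 0 1 ×ˢ Set.Icc 0 T)) →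
      (∀ i, ∀ x ∈ Set.Icc (0:ℝ) 1, ∀ t ∈ Set.Icc (0:ℝ) T,
        ∑ j ∈ Finset.univ.erase i, |a i j x t| < a i i x t) →
      (∀ i j, i ≠ j → ∀ x ∈ Set.Icc (0:ℝ) 1, ∀ t ∈ Set.Icc (0:ℝ) T,
        a i j x t ≤ 0) →
      (∀ i, ∀ x ∈ Set.Icc (0:ℝ) 1, ∀ t ∈ Set.Icc (0:ℝ) T, α < ∑ j, a i j x t) →
      -- continuous data :
      ∀ (f : Fin (n + 1) → ℝ → ℝ → ℝ),
      (∀ i, ContinuousOn (fun p : ℝ × ℝ => f i p.1 p.2)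
        (Set.Icc 0 1 ×ˢ Set.Icc 0 T)) →
      ∀ (φL φR : Fin (n + 1) → ℝ → ℝ),
      (∀ i, ContinuousOn (φL i) (Set.Icc 0 T)) →
      (∀ i, ContinuousOn (φR i) (Set.Icc 0 T)) →
      ∀ (φB : Fin (n + 1) → ℝ → ℝ), (∀ i, ContinuousOn (φB i) (Set.Icc 0 1)) →
      -- u is in the domain of L :
      ∀ (u ux ut uxx : Fin (n + 1) → ℝ → ℝ → ℝ),
      (∀ i, ContinuousOn (fun p : ℝ × ℝ => u i p.1 p.2)
        (Set.Icc 0 1 ×ˢ Set.Icc 0 T)) →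
      (∀ i, ContinuousOn (fun p : ℝ × ℝ => ux i p.1 p.2)
        (Set.Icc 0 1 ×ˢ Set.Icc 0 T)) →
      (∀ i, ∀ t ∈ Set.Icc (0:ℝ) T, ∀ x ∈ Set.Icc (0:ℝ) 1,
        HasDerivWithinAt (fun y => u i y t) (ux i x t) (Set.Icc 0 1) x) →
      (∀ i, ∀ x ∈ Set.Ioo (0:ℝ) 1, ∀ t ∈ Set.Ioc (0:ℝ) T,
        HasDerivWithinAt (fun s => u i x s) (ut i x t) (Set.Icc 0 T) t) →
      (∀ i, ∀ t ∈ Set.Ioc (0:ℝ) T, ∀ x ∈ Set.Ioo (0:ℝ) 1,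
        HasDerivWithinAt (fun y => ux i y t) (uxx i x t) (Set.Ioo 0 1) x) →
      (∀ i, ContinuousOn (fun p : ℝ × ℝ => ut i p.1 p.2)
        (Set.Ioo 0 1 ×ˢ Set.Ioc 0 T)) →
      (∀ i, ContinuousOn (fun p : ℝ × ℝ => uxx i p.1 p.2)
        (Set.Ioo 0 1 ×ˢ Set.Ioc 0 T)) →
      -- u solves the Robin problem :
      (∀ i, ∀ x ∈ Set.Ioo (0:ℝ) 1, ∀ t ∈ Set.Ioc (0:ℝ) T,
        ut i x t - ε i * uxx i x t + ∑ j, a i j x t * u j x t = f i x t) →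
      (∀ i, ∀ t ∈ Set.Icc (0:ℝ) T,
        u i 0 t - Real.sqrt (ε i) * ux i 0 t = φL i t) →
      (∀ i, ∀ t ∈ Set.Icc (0:ℝ) T,
        u i 1 t + Real.sqrt (ε i) * ux i 1 t = φR i t) →
      (∀ i, ∀ x ∈ Set.Icc (0:ℝ) 1, u i x 0 = φB i x) →
      -- arbitrary upper bounds for the norms of the data :
      ∀ bL bR bB bf : ℝ,
      (∀ i, ∀ t ∈ Set.Icc (0:ℝ) T, |φL i t| ≤ bL) →
      (∀ i, ∀ t ∈ Set.Icc (0:ℝ) T, |φR i t| ≤ bR) →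
      (∀ i, ∀ x ∈ Set.Icc (0:ℝ) 1, |φB i x| ≤ bB) →
      (∀ i, ∀ x ∈ Set.Icc (0:ℝ) 1, ∀ t ∈ Set.Icc (0:ℝ) T, |f i x t| ≤ bf) →
      ∀ i, ∀ x ∈ Set.Icc (0:ℝ) 1, ∀ t ∈ Set.Icc (0:ℝ) T,
        |u i x t| ≤ C * (bL + bR + bB + bf) := by
  refine ⟨1 + 1 / α, by positivity, ?_⟩
  intro ε hε _ _ a _ _ ha hasum f _ φL φR _ _ φB _ u ux ut uxx hu _ hux hut huxx _ _ hLu hu0 hu1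
    huB bL bR bB bf hbL hbR hbB hbf i x hx t ht
  obtain ⟨hbL0, hbR0, hbB0, hbf0⟩ : 0 ≤ bL ∧ 0 ≤ bR ∧ 0 ≤ bB ∧ 0 ≤ bf :=
    ⟨(abs_nonneg _).trans (hbL i t ht), (abs_nonneg _).trans (hbR i t ht),
      (abs_nonneg _).trans (hbB i x hx), (abs_nonneg _).trans (hbf i x hx t ht)⟩
  set S := bL + bR + bB + bf
  have hS : 0 ≤ S := by positivity
  have hSM : S ≤ (1 + 1 / α) * S :=
    le_mul_of_one_le_left hS (le_add_of_nonneg_right (by positivity))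
  have hSαM : S ≤ α * ((1 + 1 / α) * S) := by
    have hα1 : α * (1 + 1 / α) = α + 1 := by field_simp
    rw [← mul_assoc, hα1]
    nlinarith
  refine HasParabolicDerivs.abs_le_of_abs_le ⟨hu, hux, hut, huxx⟩ (fun j => (hε j).le) ha
    hα0.le hasum (hS.trans hSM) (fun j y hy s hs => ?_) (fun j s hs => ?_) (fun j s hs => ?_)
    (fun j y hy => ?_) i x hx t ht
  · rw [parabolicOp, hLu j y hy s hs]
    linarith [hbf j y (Ioo_subset_Icc_self hy) s (Ioc_subset_Icc_self hs)]
  · rw [hu0 j s hs]; linarith [hbL j s hs]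
  · rw [hu1 j s hs]; linarith [hbR j s hs]
  · rw [huB j y hy]; linarith [hbB j y hy]

theorem stmt_2
    (n : ℕ) (T : ℝ) (hT : 0 < T) (α : ℝ) (hα0 : 0 < α) :
    ∃ C : ℝ, 0 < C ∧
      ∀ (ε : Fin (n + 1) → ℝ), (∀ i, 0 < ε i) → (∀ i, ε i < 1) → StrictMono ε →
      ∀ (a : Fin (n + 1) → Fin (n + 1) → ℝ → ℝ → ℝ),
      (∀ i j, ContinuousOn (fun p : ℝ × ℝ => a i j p.1 p.2)
        (Set.Icc 0 1 ×ˢ Set.Icc 0 T)) →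
      (∀ i, ∀ x ∈ Set.Icc (0:ℝ) 1, ∀ t ∈ Set.Icc (0:ℝ) T,
        ∑ j ∈ Finset.univ.erase i, |a i j x t| < a i i x t) →
      (∀ i j, i ≠ j → ∀ x ∈ Set.Icc (0:ℝ) 1, ∀ t ∈ Set.Icc (0:ℝ) T,
        a i j x t ≤ 0) →
      (∀ i, ∀ x ∈ Set.Icc (0:ℝ) 1, ∀ t ∈ Set.Icc (0:ℝ) T, α < ∑ j, a i j x t) →
      -- continuous data :
      ∀ (f : Fin (n + 1) → ℝ → ℝ → ℝ),
      (∀ i, ContinuousOn (fun p : ℝ × ℝ => f i p.1 p.2)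
        (Set.Icc 0 1 ×ˢ Set.Icc 0 T)) →
      ∀ (φL φR : Fin (n + 1) → ℝ → ℝ),
      (∀ i, ContinuousOn (φL i) (Set.Icc 0 T)) →
      (∀ i, ContinuousOn (φR i) (Set.Icc 0 T)) →
      ∀ (φB : Fin (n + 1) → ℝ → ℝ), (∀ i, ContinuousOn (φB i) (Set.Icc 0 1)) →
      -- u is in the domain of L :
      ∀ (u ux ut uxx : Fin (n + 1) → ℝ → ℝ → ℝ),
      (∀ i, ContinuousOn (fun p : ℝ × ℝ => u i p.1 p.2)
        (Set.Icc 0 1 ×ˢ Set.Icc 0 T)) →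
      (∀ i, ContinuousOn (fun p : ℝ × ℝ => ux i p.1 p.2)
        (Set.Icc 0 1 ×ˢ Set.Icc 0 T)) →
      (∀ i, ∀ t ∈ Set.Icc (0:ℝ) T, ∀ x ∈ Set.Icc (0:ℝ) 1,
        HasDerivWithinAt (fun y => u i y t) (ux i x t) (Set.Icc 0 1) x) →
      (∀ i, ∀ x ∈ Set.Ioo (0:ℝ) 1, ∀ t ∈ Set.Ioc (0:ℝ) T,
        HasDerivWithinAt (fun s => u i x s) (ut i x t) (Set.Icc 0 T) t) →
      (∀ i, ∀ t ∈ Set.Ioc (0:ℝ) T, ∀ x ∈ Set.Ioo (0:ℝ) 1,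
        HasDerivWithinAt (fun y => ux i y t) (uxx i x t) (Set.Ioo 0 1) x) →
      (∀ i, ContinuousOn (fun p : ℝ × ℝ => ut i p.1 p.2)
        (Set.Ioo 0 1 ×ˢ Set.Ioc 0 T)) →
      (∀ i, ContinuousOn (fun p : ℝ × ℝ => uxx i p.1 p.2)
        (Set.Ioo 0 1 ×ˢ Set.Ioc 0 T)) →
      -- u solves the Robin problem :
      (∀ i, ∀ x ∈ Set.Ioo (0:ℝ) 1, ∀ t ∈ Set.Ioc (0:ℝ) T,
        ut i x t - ε i * uxx i x t + ∑ j, a i j x t * u j x t = f i x t) →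
      (∀ i, ∀ t ∈ Set.Icc (0:ℝ) T,
        u i 0 t - Real.sqrt (ε i) * ux i 0 t = φL i t) →
      (∀ i, ∀ t ∈ Set.Icc (0:ℝ) T,
        u i 1 t + Real.sqrt (ε i) * ux i 1 t = φR i t) →
      (∀ i, ∀ x ∈ Set.Icc (0:ℝ) 1, u i x 0 = φB i x) →
      -- arbitrary upper bounds for the norms of the data :
      ∀ bL bR bB bf : ℝ,
      (∀ i, ∀ t ∈ Set.Icc (0:ℝ) T, |φL i t| ≤ bL) →
      (∀ i, ∀ t ∈ Set.Icc (0:ℝ) T, |φR i t| ≤ bR) →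
      (∀ i, ∀ x ∈ Set.Icc (0:ℝ) 1, |φB i x| ≤ bB) →
      (∀ i, ∀ x ∈ Set.Icc (0:ℝ) 1, ∀ t ∈ Set.Icc (0:ℝ) T, |f i x t| ≤ bf) →
      ∀ i, ∀ x ∈ Set.Icc (0:ℝ) 1, ∀ t ∈ Set.Icc (0:ℝ) T,
        |u i x t| ≤ C * (bL + bR + bB + bf) :=
  stmt_2_general n T α hα0
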